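/- The endofunctor V ↦ V-Gph on the category of locally small categories preserves the limit of any inverse sequence of categories; more precisely, if V is the limit in CAT of a tower ⋯ → V₂ → V₁ → V₀, then V-Gph is canonically the limit of ⋯ → V₂-Gph → V₁-Gph → V₀-Gph with connecting functors given by applying (−)₊. -/

import Mathlib

open CategoryTheory Limits

universe w w' v u v' u' v'' u''

/-- A `V`-graph: a set of objects together with a `V`-object of arrows between each
ordered pair of objects. -/
structure VGraph (V : Type u) [Category.{v} V] : Type (max u (w + 1)) where
  obj : Type w
  hom : obj → obj → V

namespace VGraph

variable {V : Type u} [Category.{v} V]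

/-- A morphism of `V`-graphs: a function on objects together with morphisms on homs. -/
structure Hom (A B : VGraph.{w} V) : Type (max w v) where
  f : A.obj → B.obj
  φ : ∀ a a' : A.obj, A.hom a a' ⟶ B.hom (f a) (f a')

theorem Hom.hext {A B : VGraph.{w} V} {F G : Hom A B}
    (h1 : F.f = G.f) (h2 : HEq F.φ G.φ) : F = G := by
  cases F; cases G; cases h1; cases h2; rfl

instance : Category.{max w v} (VGraph.{w} V) where
  Hom := Hom
  id A := ⟨id, fun _ _ => 𝟙 _⟩
  comp F G := ⟨G.f ∘ F.f, fun a a' => F.φ a a' ≫ G.φ (F.f a) (F.f a')⟩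
  id_comp F := Hom.hext rfl (heq_of_eq (by funext a a'; exact Category.id_comp _))
  comp_id F := Hom.hext rfl (heq_of_eq (by funext a a'; exact Category.comp_id _))
  assoc F G H := Hom.hext rfl (heq_of_eq (by funext a a'; exact Category.assoc _ _ _))

end VGraph

/-- The functor `H₊ : V-Gph ⥤ W-Gph` induced by `H : V ⥤ W`: identity on object sets,
`H` on hom-objects. -/
def mapGraph {V : Type u} [Category.{v} V] {W : Type u'} [Category.{v'} W] (H : V ⥤ W) :
    VGraph.{w} V ⥤ VGraph.{w} W where
  obj A := ⟨A.obj, fun a a' => H.obj (A.hom a a')⟩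
  map F := ⟨F.f, fun a a' => H.map (F.φ a a')⟩
  map_id A := VGraph.Hom.hext rfl (heq_of_eq (by funext a a'; exact H.map_id _))
  map_comp F G := VGraph.Hom.hext rfl (heq_of_eq (by funext a a'; exact H.map_comp _ _))

/-- The enriched-graph endofunctor `V ↦ V-Gph`, `H ↦ H₊` on the category of categories. -/
def vgraphEndofunctor : Cat.{u, u + 1} ⥤ Cat.{u, u + 1} where
  obj C := Cat.of (VGraph.{u} C)
  map F := (mapGraph F.toFunctor).toCatHom
  map_id _ := rfl
  map_comp _ _ := rfl

/-! A functor `C ⥤ V-Gph` is the same as a functor `O : C ⥤ Type` of object sets together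
with a functor to `V` from the category of elements of `O × O`, sending `(X, a, a')` to the
hom-object from `a` to `a'` in the graph over `X` (`VGraph.mkFunctor`, `VGraph.homFunctor`).
For a cone over a connected diagram `j ↦ V_j-Gph`, all legs have the same object functor `O`,
because `(−)₊` does not change object sets; their hom parts then form a cone over `j ↦ V_j`
whose vertex is the category of elements of `O × O`. The lift of that cone to the limit `V`,
together with `O`, is the lift to `V-Gph`, and it is unique because the lift to `V` is. -/

namespace VGraph

variable {V : Type u} [Category.{v} V]

theorem Hom.ext' {A B : VGraph.{w} V} {F G : A ⟶ B} (hf : ∀ a, F.f a = G.f a)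
    (hφ : ∀ a a', HEq (F.φ a a') (G.φ a a')) : F = G :=
  Hom.hext (funext hf) (Function.hfunext rfl fun a _ h => by
    cases h; exact Function.hfunext rfl fun a' _ h' => by cases h'; exact hφ a a')

theorem Hom.congr_φ {A B : VGraph.{w} V} {F G : A ⟶ B} (h : F = G) (a a' : A.obj) :
    F.φ a a' = G.φ a a' ≫ eqToHom (by rw [h]) := by
  subst h; simp

@[simp]
theorem id_f (A : VGraph.{w} V) (a : A.obj) : (𝟙 A : A ⟶ A).f a = a := rfl

@[simp]
theorem comp_f {A B D : VGraph.{w} V} (F : A ⟶ B) (G : B ⟶ D) (a : A.obj) :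
    (F ≫ G).f a = G.f (F.f a) := rfl

@[simp]
theorem id_φ (A : VGraph.{w} V) (a a' : A.obj) : (𝟙 A : A ⟶ A).φ a a' = 𝟙 (A.hom a a') := rfl

@[simp]
theorem comp_φ {A B D : VGraph.{w} V} (F : A ⟶ B) (G : B ⟶ D) (a a' : A.obj) :
    (F ≫ G).φ a a' = F.φ a a' ≫ G.φ (F.f a) (F.f a') := rfl

def objects : VGraph.{w} V ⥤ Type w where
  obj A := A.obj
  map F := ↾F.f

end VGraph

namespace CategoryTheory

variable {C : Type u} [Category.{v} C]

abbrev Functor.pairs (O : C ⥤ Type w) : C ⥤ Type w where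
  obj X := O.obj X × O.obj X
  map f := ↾(Prod.map (O.map f) (O.map f))

theorem CategoryOfElements.map_heq {F : C ⥤ Type w} {D : Type u'} [Category.{v'} D]
    (K : F.Elements ⥤ D) {p q q' : F.Elements} (h : q = q') {f : p ⟶ q} {g : p ⟶ q'}
    (hfg : HEq f.val g.val) : HEq (K.map f) (K.map g) := by
  subst h
  obtain rfl : f = g := Subtype.ext (eq_of_heq hfg)
  rfl

end CategoryTheory

namespace VGraph

variable {C : Type u} [Category.{v} C] {V : Type u'} [Category.{v'} V]
  {W : Type u''} [Category.{v''} W]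

def mkFunctor (O : C ⥤ Type w) (K : O.pairs.Elements ⥤ V) : C ⥤ VGraph.{w} V where
  obj X := ⟨O.obj X, fun a a' => K.obj (O.pairs.elementsMk X (a, a'))⟩
  map f := ⟨O.map f, fun _ _ => K.map ⟨f, rfl⟩⟩
  map_id X := Hom.ext' (fun a => by simp) fun a a' => by
    dsimp only [id_φ]
    rw [← K.map_id]
    exact CategoryOfElements.map_heq K (by simp) HEq.rfl
  map_comp f g := Hom.ext' (fun a => by simp) fun a a' => by
    dsimp only [comp_φ]
    rw [← K.map_comp]
    exact CategoryOfElements.map_heq K (by simp) HEq.rfl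

theorem mkFunctor_comp_mapGraph (O : C ⥤ Type w) (K : O.pairs.Elements ⥤ V) (H : V ⥤ W) :
    mkFunctor O K ⋙ mapGraph H = mkFunctor O (K ⋙ H) := rfl

def homFunctor (G : C ⥤ VGraph.{w} V) : (G ⋙ objects).pairs.Elements ⥤ V where
  obj p := (G.obj p.1).hom p.2.1 p.2.2
  map {p q} f := (G.map f.1).φ p.2.1 p.2.2 ≫ eqToHom
    (show (G.obj q.1).hom ((G.map f.1).f p.2.1) ((G.map f.1).f p.2.2) = _ from
      congrArg (fun e => (G.obj q.1).hom e.1 e.2) f.2)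
  map_id := by
    rintro ⟨X, a, a'⟩
    apply eq_of_heq
    refine (comp_eqToHom_heq _ _).trans ?_
    show HEq ((G.map (𝟙 X)).φ a a') (𝟙 ((G.obj X).hom a a'))
    rw [G.map_id]
    rfl
  map_comp := by
    rintro ⟨X, (a : (G.obj X).obj), (a' : (G.obj X).obj)⟩ ⟨Y, b, b'⟩ ⟨Z, c, c'⟩
      ⟨f : X ⟶ Y, hf⟩ ⟨g : Y ⟶ Z, hg⟩
    change ((G.map f).f a, (G.map f).f a') = (b, b') at hf
    change ((G.map g).f b, (G.map g).f b') = (c, c') at hg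
    obtain ⟨rfl, rfl⟩ := Prod.mk.inj hf
    obtain ⟨rfl, rfl⟩ := Prod.mk.inj hg
    show (G.map (f ≫ g)).φ a a' ≫ _ = ((G.map f).φ a a' ≫ _) ≫ (G.map g).φ _ _ ≫ _
    rw [Hom.congr_φ (G.map_comp f g)]
    simp

theorem mkFunctor_homFunctor (G : C ⥤ VGraph.{w} V) :
    mkFunctor (G ⋙ objects) (homFunctor G) = G :=
  Functor.hext (fun _ => rfl) fun _ _ _ =>
    heq_of_eq (Hom.ext' (fun _ => rfl) fun _ _ => comp_eqToHom_heq _ _)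

theorem homFunctor_comp_mapGraph (G : C ⥤ VGraph.{w} V) (H : V ⥤ W) :
    homFunctor (G ⋙ mapGraph H) = homFunctor G ⋙ H :=
  Functor.hext (fun _ => rfl) fun p q f => heq_of_eq <| by
    obtain ⟨X, (a : (G.obj X).obj), (a' : (G.obj X).obj)⟩ := p
    show H.map ((G.map f.1).φ a a') ≫ eqToHom _ = H.map ((G.map f.1).φ a a' ≫ eqToHom _)
    rw [H.map_comp, eqToHom_map]

def homFunctorOf (G : C ⥤ VGraph.{w} V) {O : C ⥤ Type w} (h : G ⋙ objects = O) :
    O.pairs.Elements ⥤ V :=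
  h ▸ homFunctor G

theorem mkFunctor_homFunctorOf (G : C ⥤ VGraph.{w} V) {O : C ⥤ Type w}
    (h : G ⋙ objects = O) : mkFunctor O (homFunctorOf G h) = G := by
  subst h
  exact mkFunctor_homFunctor G

theorem homFunctorOf_comp {G : C ⥤ VGraph.{w} V} {G' : C ⥤ VGraph.{w} W} (H : V ⥤ W)
    (hG : G ⋙ mapGraph H = G') {O : C ⥤ Type w} (h : G ⋙ objects = O)
    (h' : G' ⋙ objects = O) : homFunctorOf G h ⋙ H = homFunctorOf G' h' := by
  subst hG h
  exact (homFunctor_comp_mapGraph G H).symm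

end VGraph

noncomputable section

namespace VGraph.LimitCone

variable {J : Type*} [Category J] {K : J ⥤ Cat.{u, u + 1}}
  (s : Cone (K ⋙ vgraphEndofunctor.{u}))

abbrev leg (j : J) : s.pt ⥤ VGraph.{u} (K.obj j) := (s.π.app j).toFunctor

theorem leg_comp_mapGraph {j k : J} (f : j ⟶ k) :
    leg s j ⋙ mapGraph (K.map f).toFunctor = leg s k :=
  congrArg Cat.Hom.toFunctor (s.w f)

theorem leg_comp_objects_eq [IsPreconnected J] (j j' : J) :
    leg s j ⋙ objects = leg s j' ⋙ objects :=
  constant_of_preserves_morphisms (fun i => leg s i ⋙ objects)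
    (fun _ _ f => congrArg (· ⋙ objects) (leg_comp_mapGraph s f)) j j'

variable [IsConnected J]

abbrev commonObjects : s.pt ⥤ Type u := leg s (Classical.arbitrary J) ⋙ objects

theorem leg_comp_objects (j : J) : leg s j ⋙ objects = commonObjects s :=
  leg_comp_objects_eq s j _

abbrev legHomFunctor (j : J) : (commonObjects s).pairs.Elements ⥤ K.obj j :=
  homFunctorOf (leg s j) (leg_comp_objects s j)

theorem legHomFunctor_comp_map {j k : J} (f : j ⟶ k) :
    legHomFunctor s j ⋙ (K.map f).toFunctor = legHomFunctor s k :=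
  homFunctorOf_comp _ (leg_comp_mapGraph s f) _ _

def homCone : Cone K where
  pt := Cat.of (commonObjects s).pairs.Elements
  π :=
    { app j := (legHomFunctor s j).toCatHom
      naturality _ _ f := Cat.ext (legHomFunctor_comp_map s f).symm }

variable {c : Cone K} (hc : IsLimit c)

abbrev liftHomFunctor : (commonObjects s).pairs.Elements ⥤ c.pt :=
  (hc.lift (homCone s)).toFunctor

theorem liftHomFunctor_comp (j : J) :
    liftHomFunctor s hc ⋙ (c.π.app j).toFunctor = legHomFunctor s j :=
  congrArg Cat.Hom.toFunctor (hc.fac (homCone s) j)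

abbrev liftFunctor : s.pt ⥤ VGraph.{u} c.pt := mkFunctor (commonObjects s) (liftHomFunctor s hc)

theorem liftFunctor_comp_mapGraph (j : J) :
    liftFunctor s hc ⋙ mapGraph (c.π.app j).toFunctor = leg s j :=
  (mkFunctor_comp_mapGraph _ _ _).trans <|
    (congrArg (mkFunctor (commonObjects s)) (liftHomFunctor_comp s hc j)).trans
      (mkFunctor_homFunctorOf _ _)

theorem eq_liftFunctor (M : s.pt ⥤ VGraph.{u} c.pt)
    (hM : ∀ j, M ⋙ mapGraph (c.π.app j).toFunctor = leg s j) : M = liftFunctor s hc := by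
  have hO : M ⋙ objects = commonObjects s :=
    (congrArg (· ⋙ objects) (hM (Classical.arbitrary J))).trans (leg_comp_objects s _)
  have hK : homFunctorOf M hO = liftHomFunctor s hc :=
    congrArg Cat.Hom.toFunctor <| hc.uniq (homCone s) (homFunctorOf M hO).toCatHom fun j =>
      Cat.ext (homFunctorOf_comp _ (hM j) _ _)
  rw [← mkFunctor_homFunctorOf M hO, hK]

end VGraph.LimitCone

open VGraph.LimitCone in
def isLimitVGraphEndofunctorMapCone {J : Type*} [Category J] [IsConnected J]
    {K : J ⥤ Cat.{u, u + 1}} {c : Cone K} (hc : IsLimit c) :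
    IsLimit (vgraphEndofunctor.mapCone c) where
  lift s := (liftFunctor s hc).toCatHom
  fac s j := Cat.ext (liftFunctor_comp_mapGraph s hc j)
  uniq s m hm :=
    Cat.ext (eq_liftFunctor s hc m.toFunctor fun j => congrArg Cat.Hom.toFunctor (hm j))

instance preservesLimitsOfShape_vgraphEndofunctor {J : Type*} [Category J] [IsConnected J] :
    PreservesLimitsOfShape J vgraphEndofunctor.{u} where
  preservesLimit := ⟨fun hc => ⟨isLimitVGraphEndofunctorMapCone hc⟩⟩

end

/-- The endofunctor `V ↦ V-Gph` preserves limits of inverse sequences of categories: if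
`V` is the limit in `CAT` of a tower `⋯ → V₂ → V₁ → V₀`, then `V-Gph` is canonically the
limit of `⋯ → V₂-Gph → V₁-Gph → V₀-Gph` (connecting functors obtained by applying
`(−)₊`). -/
theorem vgraph_preserves_sequential_limits (tower : ℕᵒᵖ ⥤ Cat.{u, u + 1})
    (c : Cone tower) (hc : IsLimit c) :
    Nonempty (IsLimit (vgraphEndofunctor.mapCone c)) :=
  ⟨isLimitOfPreserves vgraphEndofunctor hc⟩
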